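/- For every integer n ≥ 1, real α, and complex z: J_0(z) + 2·Σ_{k=1}^∞ e^{ikn·π/2}·J_{kn}(z)·cos(knα) = (1/n)·Σ_{ℓ=0}^{n-1} e^{iz·cos(α+2πℓ/n)}. -/

import Mathlib

open scoped Real

/-- Bessel function of the first kind of integer order `m`,
defined by `J_m(z) = (1/2π) ∫_0^{2π} e^{i z sin θ - i m θ} dθ`. -/
noncomputable def besselJ (m : ℤ) (z : ℂ) : ℂ :=
  (1 / (2 * Real.pi)) * ∫ θ in (0:ℝ)..(2 * Real.pi),
    Complex.exp (z * Complex.sin (θ:ℂ) * Complex.I - (m:ℂ) * (θ:ℂ) * Complex.I)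

/-!
Expanding `exp (i z cos θ)` in the exponential series and `(e^{iθ} + e^{-iθ})ᵖ` binomially
gives an absolutely convergent trigonometric series, which is therefore the Fourier series
of its sum; a shift by `π/2` turns its Fourier coefficients into `iᵐ Jₘ(z)` (Jacobi–Anger).
Averaging over the `n` points `α + 2πℓ/n` filters out, by summing roots of unity, every
frequency not divisible by `n`; since `θ ↦ exp (i z cos θ)` is even, its coefficients at
`±m` agree, and the surviving terms pair up into cosines.
-/

open Complex Finset

namespace JacobiAnger

lemma fourierCoeffOn_two_pi (f : ℝ → ℂ) (m : ℤ) :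
    fourierCoeffOn Real.two_pi_pos f m =
      1 / (2 * π) * ∫ θ in (0 : ℝ)..2 * π, cexp (-(m * θ * I)) * f θ := by
  rw [fourierCoeffOn_eq_integral f m, real_smul]
  simp only [sub_zero]
  congr 1
  · push_cast; ring
  refine intervalIntegral.integral_congr fun θ _ => ?_
  rw [fourier_coe_apply (T := 2 * π - 0), smul_eq_mul]
  refine congrArg (· * f θ) (congrArg cexp ?_)
  have : (π : ℂ) ≠ 0 := ofReal_ne_zero.mpr Real.pi_ne_zero
  push_cast
  field_simp
  ring

lemma norm_exp_int_mul_I (k : ℤ) (θ : ℝ) : ‖cexp (k * θ * I)‖ = 1 := by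
  exact_mod_cast norm_exp_ofReal_mul_I (k * θ)

lemma integral_exp_int_mul_I (d : ℤ) :
    ∫ θ in (0 : ℝ)..2 * π, cexp (d * θ * I) = if d = 0 then (2 * π : ℂ) else 0 := by
  split_ifs with hd
  · simp [hd]
  · have hc : (d : ℂ) * I ≠ 0 := mul_ne_zero (Int.cast_ne_zero.mpr hd) I_ne_zero
    simp_rw [mul_right_comm _ _ I]
    rw [integral_exp_mul_complex hc]
    push_cast
    rw [show (d : ℂ) * I * (2 * π) = d * (2 * π * I) by ring, exp_int_mul_two_pi_mul_I]
    simp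

lemma periodic_exp_neg_int_mul_I_mul {f : ℝ → ℂ} (hf : Function.Periodic f (2 * π)) (m : ℤ) :
    Function.Periodic (fun θ : ℝ => cexp (-(m * θ * I)) * f θ) (2 * π) := by
  intro θ
  simp only [hf θ]
  congr 1
  rw [show -((m : ℂ) * ((θ + 2 * π : ℝ) : ℂ) * I) = -(m * θ * I) + (-m : ℤ) * (2 * π * I) by
      push_cast; ring,
    exp_add, exp_int_mul_two_pi_mul_I, mul_one]

lemma fourierCoeffOn_comp_add_right {f : ℝ → ℂ} (hf : Function.Periodic f (2 * π)) (c : ℝ)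
    (m : ℤ) :
    fourierCoeffOn Real.two_pi_pos (fun θ => f (θ + c)) m =
      cexp (m * c * I) * fourierCoeffOn Real.two_pi_pos f m := by
  have hshift : ∀ θ : ℝ, cexp (-(m * θ * I)) * f (θ + c) =
      cexp (m * c * I) * (cexp (-(m * ((θ + c : ℝ) : ℂ) * I)) * f (θ + c)) := by
    intro θ
    rw [← mul_assoc, ← exp_add]
    push_cast
    ring_nf
  simp only [fourierCoeffOn_two_pi, hshift, intervalIntegral.integral_const_mul,
    intervalIntegral.integral_comp_add_right (fun t => cexp (-(m * (t : ℂ) * I)) * f t),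
    zero_add, add_comm (2 * π) c,
    (periodic_exp_neg_int_mul_I_mul hf m).intervalIntegral_add_eq c 0]
  ring

lemma fourierCoeffOn_neg_of_even {f : ℝ → ℂ} (hf : Function.Periodic f (2 * π))
    (heven : ∀ θ, f (-θ) = f θ) (m : ℤ) :
    fourierCoeffOn Real.two_pi_pos f (-m) = fourierCoeffOn Real.two_pi_pos f m := by
  have hrefl : ∀ θ : ℝ, cexp (-((-m : ℤ) * θ * I)) * f θ =
      cexp (-(m * ((-θ : ℝ) : ℂ) * I)) * f (-θ) := by
    intro θ
    rw [heven]
    push_cast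
    ring_nf
  simp only [fourierCoeffOn_two_pi, hrefl]
  have hper := (periodic_exp_neg_int_mul_I_mul hf m).intervalIntegral_add_eq (-(2 * π)) 0
  rw [neg_add_cancel, zero_add] at hper
  rw [intervalIntegral.integral_comp_neg (fun t => cexp (-(m * (t : ℂ) * I)) * f t), neg_zero,
    hper]

section TrigonometricSeries

variable {ι : Type*} [Countable ι] {b : ι → ℂ} {k : ι → ℤ} {f : ℝ → ℂ}

theorem hasSum_fourierCoeffOn_of_hasSum (hb : Summable (‖b ·‖))
    (hf : ∀ θ : ℝ, HasSum (fun i => b i * cexp (k i * θ * I)) (f θ)) (m : ℤ) :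
    HasSum (fun i : k ⁻¹' {m} => b i) (fourierCoeffOn Real.two_pi_pos f m) := by
  have hterm : ∀ i (θ : ℝ), cexp (-(m * θ * I)) * (b i * cexp (k i * θ * I)) =
      b i * cexp ((k i - m : ℤ) * θ * I) := by
    intro i θ
    rw [mul_left_comm, ← exp_add]
    push_cast
    ring_nf
  have hint : HasSum (fun i => ∫ θ in (0 : ℝ)..2 * π, b i * cexp ((k i - m : ℤ) * θ * I))
      (∫ θ in (0 : ℝ)..2 * π, cexp (-(m * θ * I)) * f θ) := by
    refine intervalIntegral.hasSum_integral_of_dominated_convergence (fun i _ => ‖b i‖)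
      (fun i => (Continuous.aestronglyMeasurable (by fun_prop)))
      (fun i => Filter.Eventually.of_forall fun θ _ => ?_)
      (Filter.Eventually.of_forall fun _ _ => hb) intervalIntegrable_const
      (Filter.Eventually.of_forall fun θ _ => ?_)
    · rw [norm_mul, norm_exp_int_mul_I, mul_one]
    · simpa only [hterm] using (hf θ).mul_left (cexp (-(m * θ * I)))
  refine (hasSum_subtype_iff_indicator (f := b)).mpr ?_
  rw [fourierCoeffOn_two_pi]
  refine (hint.mul_left (1 / (2 * π : ℂ))).congr_fun fun i => ?_
  have : (π : ℂ) ≠ 0 := ofReal_ne_zero.mpr Real.pi_ne_zero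
  rw [intervalIntegral.integral_const_mul, integral_exp_int_mul_I]
  by_cases hi : k i = m
  · rw [Set.indicator_of_mem (s := k ⁻¹' {m}) hi, hi, sub_self, if_pos rfl]
    field_simp
  · rw [Set.indicator_of_notMem (s := k ⁻¹' {m}) hi, if_neg (sub_ne_zero.mpr hi), mul_zero,
      mul_zero]

theorem hasSum_fourier_series_of_hasSum (hb : Summable (‖b ·‖))
    (hf : ∀ θ : ℝ, HasSum (fun i => b i * cexp (k i * θ * I)) (f θ)) (θ : ℝ) :
    HasSum (fun m : ℤ => fourierCoeffOn Real.two_pi_pos f m * cexp (m * θ * I)) (f θ) := by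
  have hfiber : ∀ m : ℤ, ∑' i : k ⁻¹' {m}, b i * cexp (k i * θ * I) =
      fourierCoeffOn Real.two_pi_pos f m * cexp (m * θ * I) := by
    intro m
    rw [← ((hasSum_fourierCoeffOn_of_hasSum hb hf m).mul_right (cexp (m * θ * I))).tsum_eq]
    refine tsum_congr fun ⟨i, hi⟩ => ?_
    rw [Set.mem_preimage, Set.mem_singleton_iff] at hi
    rw [hi]
  simpa only [hfiber] using (hf θ).tsum_fiberwise k

end TrigonometricSeries

open Nat in
/-- The coefficient of `e^{iqθ} e^{-i(p-q)θ}` in the binomial expansion of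
`exp (i z cos θ) = ∑ₚ (iz/2)ᵖ (e^{iθ} + e^{-iθ})ᵖ / p!`. -/
noncomputable def expICosCoeff (z : ℂ) (pq : ℕ × ℕ) : ℂ :=
  (I * z / 2) ^ pq.1 / pq.1 ! * pq.1.choose pq.2

def expICosFreq (pq : ℕ × ℕ) : ℤ := 2 * pq.2 - pq.1

lemma expICosCoeff_eq_zero {z : ℂ} {p q : ℕ} (hq : p < q) : expICosCoeff z (p, q) = 0 := by
  rw [expICosCoeff, Nat.choose_eq_zero_of_lt hq, Nat.cast_zero, mul_zero]

open Nat in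
lemma hasSum_norm_expICosCoeff_row (z : ℂ) (p : ℕ) :
    HasSum (fun q => ‖expICosCoeff z (p, q)‖) (‖z‖ ^ p / p !) := by
  have hrow := hasSum_sum_of_ne_finset_zero (L := .unconditional ℕ)
    (f := fun q => ‖expICosCoeff z (p, q)‖) (s := range (p + 1))
    fun q hq => by rw [expICosCoeff_eq_zero (by simpa using hq), norm_zero]
  have hnorm : ∀ q, ‖expICosCoeff z (p, q)‖ = (‖z‖ / 2) ^ p / p ! * p.choose q := by
    intro q
    simp [expICosCoeff]
  rwa [sum_congr rfl fun q _ => hnorm q, ← mul_sum, ← Nat.cast_sum, Nat.sum_range_choose,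
    Nat.cast_pow, Nat.cast_two, div_pow, div_mul_eq_mul_div, div_mul_eq_mul_div,
    mul_div_cancel_right₀ _ (by positivity)] at hrow

lemma summable_norm_expICosCoeff (z : ℂ) : Summable (‖expICosCoeff z ·‖) :=
  (summable_prod_of_nonneg fun _ => norm_nonneg _).mpr
    ⟨fun p => (hasSum_norm_expICosCoeff_row z p).summable, by
      simpa only [(hasSum_norm_expICosCoeff_row z _).tsum_eq]
        using Real.summable_pow_div_factorial ‖z‖⟩

open Nat in
lemma hasSum_expICos_row (z : ℂ) (θ : ℝ) (p : ℕ) :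
    HasSum (fun q => expICosCoeff z (p, q) * cexp (expICosFreq (p, q) * θ * I))
      ((I * z * Real.cos θ) ^ p / p !) := by
  have hrow := hasSum_sum_of_ne_finset_zero (L := .unconditional ℕ)
    (f := fun q => expICosCoeff z (p, q) * cexp (expICosFreq (p, q) * θ * I))
    (s := range (p + 1)) fun q hq => by rw [expICosCoeff_eq_zero (by simpa using hq), zero_mul]
  convert hrow using 1
  rw [ofReal_cos, cos, mul_div_assoc', div_pow, mul_pow, add_pow, mul_sum, sum_div, sum_div]
  refine sum_congr rfl fun q hq => ?_
  have hqp : q ≤ p := Nat.lt_succ_iff.mp (mem_range.mp hq)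
  have hexp : cexp (θ * I) ^ q * cexp (-θ * I) ^ (p - q) =
      cexp (expICosFreq (p, q) * θ * I) := by
    rw [← exp_nat_mul, ← exp_nat_mul, ← exp_add, expICosFreq, Nat.cast_sub hqp]
    push_cast
    ring_nf
  rw [expICosCoeff, ← hexp, div_pow]
  ring

lemma hasSum_expICos (z : ℂ) (θ : ℝ) :
    HasSum (fun pq => expICosCoeff z pq * cexp (expICosFreq pq * θ * I))
      (cexp (I * z * Real.cos θ)) := by
  have hs : Summable (fun pq => expICosCoeff z pq * cexp (expICosFreq pq * θ * I)) :=
    .of_norm <| by simpa only [norm_mul, norm_exp_int_mul_I, mul_one]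
      using summable_norm_expICosCoeff z
  have hexp := NormedSpace.expSeries_div_hasSum_exp (I * z * Real.cos θ)
  rw [← exp_eq_exp_ℂ] at hexp
  rw [hexp.unique (hs.hasSum.prod_fiberwise (hasSum_expICos_row z θ))]
  exact hs.hasSum

lemma besselJ_eq_fourierCoeffOn (m : ℤ) (z : ℂ) :
    besselJ m z =
      fourierCoeffOn Real.two_pi_pos (fun θ : ℝ => cexp (z * Complex.sin θ * I)) m := by
  rw [fourierCoeffOn_two_pi, besselJ]
  congr 1
  refine intervalIntegral.integral_congr fun θ _ => ?_
  rw [← exp_add]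
  ring_nf

lemma fourierCoeffOn_expICos (z : ℂ) (m : ℤ) :
    fourierCoeffOn Real.two_pi_pos (fun θ : ℝ => cexp (I * z * Real.cos θ)) m =
      cexp (I * m * (π / 2 : ℝ)) * besselJ m z := by
  have hper : Function.Periodic (fun θ : ℝ => cexp (z * Complex.sin θ * I)) (2 * π) := by
    intro θ
    push_cast
    rw [sin_add_two_pi]
  have hshift : (fun θ : ℝ => cexp (I * z * Real.cos θ)) =
      fun θ : ℝ => cexp (z * Complex.sin ((θ + π / 2 : ℝ)) * I) := by
    funext θ
    push_cast
    rw [sin_add_pi_div_two]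
    ring_nf
  rw [hshift, fourierCoeffOn_comp_add_right hper, besselJ_eq_fourierCoeffOn]
  ring_nf

theorem hasSum_jacobiAnger (z : ℂ) (θ : ℝ) :
    HasSum (fun m : ℤ => cexp (I * m * (π / 2 : ℝ)) * besselJ m z * cexp (m * θ * I))
      (cexp (I * z * Real.cos θ)) := by
  simpa only [fourierCoeffOn_expICos] using
    hasSum_fourier_series_of_hasSum (summable_norm_expICosCoeff z) (hasSum_expICos z) θ

lemma exp_mul_besselJ_neg (z : ℂ) (m : ℤ) :
    cexp (I * (-m : ℤ) * (π / 2 : ℝ)) * besselJ (-m) z =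
      cexp (I * m * (π / 2 : ℝ)) * besselJ m z := by
  simp only [← fourierCoeffOn_expICos]
  refine fourierCoeffOn_neg_of_even (fun θ => ?_) (fun θ => ?_) m
  · simp [Real.cos_add_two_pi]
  · simp [Real.cos_neg]

lemma geom_sum_eq_ite_of_pow_eq_one {K : Type*} [Field K] [DecidableEq K] {w : K} {n : ℕ}
    (hw : w ^ n = 1) :
    ∑ ℓ ∈ range n, w ^ ℓ = if w = 1 then (n : K) else 0 := by
  split_ifs with h
  · simp [h]
  · rw [geom_sum_eq h, hw, sub_self, zero_div]

theorem hasSum_multisection {c : ℤ → ℂ} {F : ℝ → ℂ}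
    (hF : ∀ θ : ℝ, HasSum (fun m : ℤ => c m * cexp (m * θ * I)) (F θ)) {n : ℕ} (hn : n ≠ 0)
    (α : ℝ) :
    HasSum (fun m : ℤ => if (n : ℤ) ∣ m then c m * cexp (m * α * I) else 0)
      (1 / n * ∑ ℓ ∈ range n, F (α + 2 * π * ℓ / n)) := by
  have hζ := isPrimitiveRoot_exp n hn
  have hsum := (hasSum_sum (s := range n) fun ℓ _ => hF (α + 2 * π * ℓ / n)).mul_left (1 / n : ℂ)
  refine hsum.congr_fun fun m => ?_
  have hterm : ∀ ℓ : ℕ, c m * cexp (m * ((α + 2 * π * ℓ / n : ℝ) : ℂ) * I) =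
      c m * cexp (m * α * I) * (cexp (2 * π * I / n) ^ m) ^ ℓ := by
    intro ℓ
    rw [← exp_int_mul, ← exp_nat_mul, mul_assoc (c m), ← exp_add]
    push_cast
    ring_nf
  have hpow : (cexp (2 * π * I / n) ^ m) ^ n = 1 := by
    rw [← zpow_natCast, ← zpow_mul, mul_comm m, zpow_mul, zpow_natCast, hζ.pow_eq_one,
      one_zpow]
  have : (n : ℂ) ≠ 0 := Nat.cast_ne_zero.mpr hn
  rw [sum_congr rfl fun ℓ _ => hterm ℓ, ← mul_sum, geom_sum_eq_ite_of_pow_eq_one hpow]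
  simp only [hζ.zpow_eq_one_iff_dvd]
  split_ifs
  · field_simp
  · simp

theorem hasSum_two_mul_cos_of_even {c : ℤ → ℂ} (hc : ∀ m, c (-m) = c m) {n : ℕ} (hn : n ≠ 0)
    {α : ℝ} {S : ℂ}
    (h : HasSum (fun m : ℤ => if (n : ℤ) ∣ m then c m * cexp (m * α * I) else 0) S) :
    HasSum (fun k : ℕ => 2 * (c ((k + 1) * n) * Real.cos ((k + 1) * n * α))) (S - c 0) := by
  set f : ℤ → ℂ := fun j => c (j * n) * cexp ((j * n : ℤ) * α * I)
  have hf : HasSum f S := by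
    refine (((mul_left_injective₀ (Int.natCast_ne_zero.mpr hn)).hasSum_iff fun m hm => ?_).mpr
      h).congr_fun fun j => ?_
    · rw [if_neg]
      rintro ⟨j, rfl⟩
      exact hm ⟨j, mul_comm _ _⟩
    · simp [f]
  have hpair := (hasSum_nat_add_iff' 1).mpr hf.nat_add_neg
  have hval : S + f 0 - ∑ i ∈ range 1, (f i + f (-i)) = S - c 0 := by
    simp [f]
  rw [hval] at hpair
  refine hpair.congr_fun fun k => ?_
  simp only [f]
  push_cast
  rw [show -((k : ℤ) + 1) * n = -(((k : ℤ) + 1) * n) by ring, hc, cos]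
  ring_nf

end JacobiAnger

open JacobiAnger in
theorem statement1 (n : ℕ) (hn : 1 ≤ n) (α : ℝ) (z : ℂ) :
    besselJ 0 z + 2 * ∑' k : ℕ,
        Complex.exp (Complex.I * ((k:ℂ) + 1) * (n:ℂ) * ((π / 2 : ℝ) : ℂ)) *
          besselJ ((k + 1) * n) z * (Real.cos ((k + 1) * n * α) : ℂ) =
      (1 / (n:ℂ)) * ∑ ℓ ∈ Finset.range n,
        Complex.exp (Complex.I * z * (Real.cos (α + 2 * π * ℓ / n) : ℂ)) := by
  have hn0 : n ≠ 0 := by omega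
  set c : ℤ → ℂ := fun m => cexp (I * m * (π / 2 : ℝ)) * besselJ m z
  have hfold := hasSum_two_mul_cos_of_even (c := c) (exp_mul_besselJ_neg z) hn0
    (hasSum_multisection (hasSum_jacobiAnger z) hn0 α)
  have hterm : ∀ k : ℕ, cexp (I * (k + 1) * n * (π / 2 : ℝ)) * besselJ ((k + 1) * n) z *
      Real.cos ((k + 1) * n * α) = c ((k + 1) * n) * Real.cos ((k + 1) * n * α) := fun k => by
    simp only [c]
    push_cast
    ring_nf
  have hc0 : c 0 = besselJ 0 z := by simp [c]
  rw [tsum_congr hterm, ← tsum_mul_left, hfold.tsum_eq, hc0, add_sub_cancel]
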